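/- arXiv:2305.08310 — 5 statements merged into one kernel-verified Lean document; each statement's English description precedes it below -/
import Mathlib

section
/- Let α : ℝ → ℝ be continuous, β : ℝ → ℝ continuous, λ > 0 a constant, and set γ(t) = λ·α(t). Let k ∈ ℂ with Re(k) ≠ 0, η ∈ ℝ, let P be an antiderivative of α and Q an antiderivative of β. Define θ(x,t) = k·x + i·k²·P(t) + η and A(x,t) = e^{i·Q(t)} · e^{θ(x,t)} / (1 + (λ/(2·(k+k̄)²))·e^{θ(x,t)+θ̄(x,t)}). Then A satisfies the vcNLS equation i·A_t + α(t)·A_xx + β(t)·A + γ(t)·|A|²·A = 0 for all (x,t) ∈ ℝ². -/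
/-!
Write `A = e^f / (1 + c e^(f + f̄))` with `f = iQ + θ` and `c = λ / (2 (k + k̄)²) > 0`, and put
`w = c e^(f + f̄) / (1 + c e^(f + f̄))`. Since `w' = (f + f̄)' w (1 - w)`, every derivative of `A`
is `A` times a polynomial in `w`: `A' = A (f' - (f + f̄)' w)`. Moreover `c |A|² = w (1 - w)`, so the
equation becomes a polynomial identity in `w`: dispersion and the time derivative leave
`-2 (k + k̄)² α w (1 - w) A`, which the Kerr term `λ α |A|² A = 2 (k + k̄)² α w (1 - w) A` cancels.
-/

open Complex ComplexConjugate

namespace VcNLS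

noncomputable def profile (c a b : ℂ) : ℂ := exp a / (1 + c * exp b)

noncomputable def weight (c b : ℂ) : ℂ := c * exp b / (1 + c * exp b)

section Derivatives

variable {c : ℂ} {f g : ℝ → ℂ} {f' g' : ℂ} {y : ℝ}

theorem hasDerivAt_weight (hg : HasDerivAt g g' y) (hD : 1 + c * exp (g y) ≠ 0) :
    HasDerivAt (fun y => weight c (g y)) (g' * (weight c (g y) * (1 - weight c (g y)))) y := by
  have hnum := hg.cexp.const_mul c
  refine (hnum.div (hnum.const_add 1) hD).congr_deriv ?_
  unfold weight
  field_simp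

theorem hasDerivAt_profile (hf : HasDerivAt f f' y) (hg : HasDerivAt g g' y)
    (hD : 1 + c * exp (g y) ≠ 0) :
    HasDerivAt (fun y => profile c (f y) (g y))
      (profile c (f y) (g y) * (f' - g' * weight c (g y))) y := by
  refine (hf.cexp.div ((hg.cexp.const_mul c).const_add 1) hD).congr_deriv ?_
  unfold profile weight
  field_simp

theorem hasDerivAt_deriv_profile {a b : ℂ} (hf : ∀ y, HasDerivAt f a y)
    (hg : ∀ y, HasDerivAt g b y) (hD : ∀ y, 1 + c * exp (g y) ≠ 0) (x : ℝ) :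
    HasDerivAt (deriv fun y => profile c (f y) (g y))
      (profile c (f x) (g x) * ((a - b * weight c (g x)) ^ 2
        - b ^ 2 * weight c (g x) * (1 - weight c (g x)))) x := by
  have hderiv : deriv (fun y => profile c (f y) (g y))
      = fun y => profile c (f y) (g y) * (a - b * weight c (g y)) :=
    funext fun y => (hasDerivAt_profile (hf y) (hg y) (hD y)).deriv
  rw [hderiv]
  refine ((hasDerivAt_profile (hf x) (hg x) (hD x)).mul
    (((hasDerivAt_weight (hg x) (hD x)).const_mul b).const_sub a)).congr_deriv ?_
  ring

end Derivatives

theorem one_add_mul_exp_add_conj_ne_zero {c : ℝ} (hc : 0 ≤ c) (a : ℂ) :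
    1 + (c : ℂ) * exp (a + conj a) ≠ 0 := by
  rw [add_conj, ← ofReal_exp]
  exact_mod_cast (by positivity : (0 : ℝ) < 1 + c * Real.exp (2 * a.re)).ne'

theorem mul_norm_profile_sq {c : ℝ} {a : ℂ} (hD : 1 + (c : ℂ) * exp (a + conj a) ≠ 0) :
    c * (‖profile c a (a + conj a)‖ : ℂ) ^ 2
      = weight c (a + conj a) * (1 - weight c (a + conj a)) := by
  have hconj : conj (profile c a (a + conj a)) = profile c (conj a) (a + conj a) := by
    simp only [profile, map_div₀, map_add, map_one, map_mul, ← exp_conj, conj_ofReal, conj_conj,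
      add_comm (conj a)]
  rw [← mul_conj', hconj]
  unfold profile weight
  rw [div_mul_div_comm, ← exp_add]
  field_simp
  ring

theorem div_two_mul_add_conj_sq_eq_ofReal (lam : ℝ) (k : ℂ) :
    (lam : ℂ) / (2 * (k + conj k) ^ 2) = ((lam / (8 * k.re ^ 2) : ℝ) : ℂ) := by
  rw [add_conj]
  push_cast
  ring

theorem residual_eq_zero (F α β : ℂ) {w N k K c lam : ℂ} (hK : k + K ≠ 0)
    (hc : c = lam / (2 * (k + K) ^ 2)) (hN : c * N = w * (1 - w)) :
    I * (F * (I * β + I * k ^ 2 * α - (I * k ^ 2 * α - I * K ^ 2 * α) * w))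
      + α * (F * ((k - (k + K) * w) ^ 2 - (k + K) ^ 2 * w * (1 - w)))
      + β * F + lam * α * N * F = 0 := by
  have hlam : lam = 2 * c * (k + K) ^ 2 := by
    rw [hc]
    field_simp
  linear_combination (α * N * F) * hlam + (2 * (k + K) ^ 2 * α * F) * hN
    + (F * (β + k ^ 2 * α - (k ^ 2 - K ^ 2) * α * w)) * I_sq

end VcNLS

theorem vcNLS_one_soliton_general
    (α β : ℝ → ℝ)
    (lam : ℝ) (hlam : 0 < lam)
    (γ : ℝ → ℝ) (hγ : ∀ t, γ t = lam * α t)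
    (k : ℂ) (hk : k.re ≠ 0) (η : ℝ)
    (P Q : ℝ → ℝ)
    (hP : ∀ t, HasDerivAt P (α t) t) (hQ : ∀ t, HasDerivAt Q (β t) t) :
    let θ : ℝ → ℝ → ℂ := fun x t => k * (x : ℂ) + Complex.I * k ^ 2 * (P t : ℂ) + (η : ℂ)
    let θb : ℝ → ℝ → ℂ := fun x t =>
      (starRingEnd ℂ) k * (x : ℂ) - Complex.I * ((starRingEnd ℂ) k) ^ 2 * (P t : ℂ) + (η : ℂ)
    let A : ℝ → ℝ → ℂ := fun x t =>
      Complex.exp (Complex.I * (Q t : ℂ)) * Complex.exp (θ x t) /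
        (1 + ((lam : ℂ) / (2 * (k + (starRingEnd ℂ) k) ^ 2)) * Complex.exp (θ x t + θb x t))
    ∀ x t : ℝ,
      Complex.I * deriv (fun τ => A x τ) t
        + (α t : ℂ) * deriv (deriv (fun y => A y t)) x
        + (β t : ℂ) * A x t
        + (γ t : ℂ) * (‖A x t‖ : ℂ) ^ 2 * A x t = 0 := by
  intro θ θb A x t
  set c : ℝ := lam / (8 * k.re ^ 2)
  have hcoeff : (lam : ℂ) / (2 * (k + conj k) ^ 2) = c :=
    VcNLS.div_two_mul_add_conj_sq_eq_ofReal lam k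
  have hk_add_conj : k + conj k ≠ 0 :=
    add_conj k ▸ ofReal_ne_zero.mpr (mul_ne_zero two_ne_zero hk)
  set f : ℝ → ℝ → ℂ := fun y τ => I * Q τ + θ y τ
  have hA : A = fun y τ => VcNLS.profile c (f y τ) (f y τ + conj (f y τ)) := by
    funext y τ
    have hsum : f y τ + conj (f y τ) = θ y τ + θb y τ := by
      simp only [f, θ, θb, map_add, map_mul, map_pow, conj_I, conj_ofReal]
      ring
    simp only [A, VcNLS.profile, hsum, hcoeff, f, exp_add]
  have hD : ∀ y τ, 1 + (c : ℂ) * exp (f y τ + conj (f y τ)) ≠ 0 := fun y τ =>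
    VcNLS.one_add_mul_exp_add_conj_ne_zero (by positivity) _
  have hfx : ∀ y : ℝ, HasDerivAt (fun y => f y t) k y := fun y =>
    ((((hasDerivAt_id y).ofReal_comp.const_mul k).add_const _).add_const _).const_add _
      |>.congr_deriv (mul_one k)
  have hgx : ∀ y : ℝ, HasDerivAt (fun y => f y t + conj (f y t)) (k + conj k) y := fun y =>
    (hfx y).add (hfx y).star
  have hft : HasDerivAt (fun τ => f x τ) (I * β t + I * k ^ 2 * α t) t :=
    ((hQ t).ofReal_comp.const_mul I).add
      ((((hP t).ofReal_comp.const_mul (I * k ^ 2)).const_add (k * x)).add_const (η : ℂ))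
  have hgt : HasDerivAt (fun τ => f x τ + conj (f x τ))
      (I * k ^ 2 * α t - I * conj k ^ 2 * α t) t := by
    refine (hft.add hft.star).congr_deriv ?_
    simp only [star_def, map_add, map_mul, map_pow, conj_I, conj_ofReal]
    ring
  simp only [hA]
  rw [(VcNLS.hasDerivAt_profile hft hgt (hD x t)).deriv,
    (VcNLS.hasDerivAt_deriv_profile hfx hgx (hD · t) x).deriv,
    hγ, ofReal_mul]
  linear_combination VcNLS.residual_eq_zero (VcNLS.profile c (f x t) (f x t + conj (f x t)))
    (α t) (β t) hk_add_conj hcoeff.symm (VcNLS.mul_norm_profile_sq (hD x t))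

/-- The general Hirota one-soliton solution of the vcNLS equation
`i·A_t + α(t)·A_xx + β(t)·A + γ(t)·|A|²·A = 0` with `γ = λ·α`, `λ > 0`. -/
theorem vcNLS_one_soliton
    (α β : ℝ → ℝ) (hα : Continuous α) (hβ : Continuous β)
    (lam : ℝ) (hlam : 0 < lam)
    (γ : ℝ → ℝ) (hγ : ∀ t, γ t = lam * α t)
    (k : ℂ) (hk : k.re ≠ 0) (η : ℝ)
    (P Q : ℝ → ℝ)
    (hP : ∀ t, HasDerivAt P (α t) t) (hQ : ∀ t, HasDerivAt Q (β t) t) :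
    let θ : ℝ → ℝ → ℂ := fun x t => k * (x : ℂ) + Complex.I * k ^ 2 * (P t : ℂ) + (η : ℂ)
    let θb : ℝ → ℝ → ℂ := fun x t =>
      (starRingEnd ℂ) k * (x : ℂ) - Complex.I * ((starRingEnd ℂ) k) ^ 2 * (P t : ℂ) + (η : ℂ)
    let A : ℝ → ℝ → ℂ := fun x t =>
      Complex.exp (Complex.I * (Q t : ℂ)) * Complex.exp (θ x t) /
        (1 + ((lam : ℂ) / (2 * (k + (starRingEnd ℂ) k) ^ 2)) * Complex.exp (θ x t + θb x t))
    ∀ x t : ℝ,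
      Complex.I * deriv (fun τ => A x τ) t
        + (α t : ℂ) * deriv (deriv (fun y => A y t)) x
        + (β t : ℂ) * A x t
        + (γ t : ℂ) * (‖A x t‖ : ℂ) ^ 2 * A x t = 0 :=
  vcNLS_one_soliton_general α β lam hlam γ hγ k hk η P Q hP hQ
end

section
/- The function A(x,t) = e^{i·t²/10} · e^{(1+i)x - t²/2} / (1 + (1/4)·e^{2x - t²}) satisfies i·A_t + (t/2)·A_xx + (t/5)·A + t·|A|²·A = 0 for all (x,t) ∈ ℝ². -/
/-!
Hirota's one-soliton for `i A_t + α A_xx + β A + γ |A|² A = 0`: with `ξ = k x + i (k² a(t) + b(t))`,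
`a' = α`, `b' = β`, the function `A = e^ξ / (1 + c e^{ξ + ξ̄})` is a solution as soon as
`γ = 8 (Re k)² c α`. With the real envelope `F = c e^{ξ + ξ̄}`, the quotients `A_t / A`,
`A_xx / A` and `‖A‖²` are rational in `F`, and the residual divided by `A` vanishes identically.
The stated solution is the case `k = 1 + i`, `c = 1/4`, `a = t²/4`, `b = t²/10`.
-/

open Complex

theorem hasDerivAt_cexp_div {u D : ℝ → ℂ} {u' D' : ℂ} {s : ℝ} (hu : HasDerivAt u u' s)
    (hD : HasDerivAt D D' s) (hD₀ : D s ≠ 0) :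
    HasDerivAt (fun s => exp (u s) / D s) (exp (u s) / D s * (u' - D' / D s)) s :=
  (hu.cexp.div hD hD₀).congr_deriv (by field_simp)

namespace VcNLS

variable (k : ℂ) (c : ℝ) (a b : ℝ → ℝ)

noncomputable def phase (x t : ℝ) : ℂ := k * x + I * (k ^ 2 * a t + b t)

/-- `c e^{ξ + ξ̄}`, as `Re ξ = (Re k) x - Im (k²) a(t)` (see `phase_re`). -/
noncomputable def envelope (x t : ℝ) : ℝ := c * Real.exp (2 * (k.re * x - (k ^ 2).im * a t))

noncomputable def soliton (x t : ℝ) : ℂ := exp (phase k a b x t) / (1 + envelope k c a x t)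

variable {k c a b}

theorem hasDerivAt_phase_space (x t : ℝ) : HasDerivAt (fun y => phase k a b y t) k x := by
  unfold phase
  simpa using ((hasDerivAt_id x).ofReal_comp.const_mul k).add_const (I * (k ^ 2 * a t + b t))

theorem hasDerivAt_phase_time {α β : ℝ} {t : ℝ} (ha : HasDerivAt a α t) (hb : HasDerivAt b β t)
    (x : ℝ) : HasDerivAt (fun τ => phase k a b x τ) (I * (k ^ 2 * α + β)) t :=
  (((ha.ofReal_comp.const_mul (k ^ 2)).add hb.ofReal_comp).const_mul I).const_add (k * x)

theorem hasDerivAt_envelope_space (x t : ℝ) :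
    HasDerivAt (fun y => envelope k c a y t) (2 * k.re * envelope k c a x t) x := by
  unfold envelope
  exact ((((hasDerivAt_id' x).const_mul k.re).sub_const _).const_mul 2).exp.const_mul c
    |>.congr_deriv (by ring)

theorem hasDerivAt_envelope_time {α : ℝ} {t : ℝ} (ha : HasDerivAt a α t) (x : ℝ) :
    HasDerivAt (fun τ => envelope k c a x τ) (-2 * (k ^ 2).im * α * envelope k c a x t) t := by
  unfold envelope
  exact (((ha.const_mul (k ^ 2).im).const_sub (k.re * x)).const_mul 2).exp.const_mul c
    |>.congr_deriv (by ring)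

theorem one_add_envelope_pos (hc : 0 ≤ c) (x t : ℝ) : 0 < 1 + envelope k c a x t := by
  unfold envelope; positivity

theorem one_add_envelope_ne_zero (hc : 0 ≤ c) (x t : ℝ) : (1 + envelope k c a x t : ℂ) ≠ 0 := by
  exact_mod_cast (one_add_envelope_pos hc x t).ne'

theorem phase_re (x t : ℝ) : (phase k a b x t).re = k.re * x - (k ^ 2).im * a t := by
  simp only [phase, add_re, mul_re, ofReal_re, ofReal_im, mul_zero, sub_zero, I_re, zero_mul,
    I_im, add_im, mul_im, zero_add, add_zero, one_mul, zero_sub]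
  ring

theorem mul_norm_soliton_sq (hc : 0 ≤ c) (x t : ℝ) :
    c * ‖soliton k c a b x t‖ ^ 2 = envelope k c a x t / (1 + envelope k c a x t) ^ 2 := by
  have hpos := one_add_envelope_pos (a := a) (k := k) hc x t
  have : ((1 + envelope k c a x t : ℝ) : ℂ) = 1 + envelope k c a x t := by push_cast; rfl
  rw [soliton, norm_div, norm_exp, phase_re, ← this, norm_real, Real.norm_of_nonneg hpos.le,
    div_pow, ← Real.exp_nat_mul, envelope]
  push_cast; ring_nf

theorem hasDerivAt_soliton_space (hc : 0 ≤ c) (x t : ℝ) :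
    HasDerivAt (fun y => soliton k c a b y t)
      (soliton k c a b x t *
        (k - 2 * k.re * envelope k c a x t / (1 + envelope k c a x t))) x := by
  unfold soliton
  exact hasDerivAt_cexp_div (hasDerivAt_phase_space x t)
    ((hasDerivAt_envelope_space x t).ofReal_comp.const_add 1) (one_add_envelope_ne_zero hc x t)
    |>.congr_deriv (by push_cast; ring)

theorem hasDerivAt_soliton_time {α β t : ℝ} (hc : 0 ≤ c) (ha : HasDerivAt a α t)
    (hb : HasDerivAt b β t) (x : ℝ) :
    HasDerivAt (fun τ => soliton k c a b x τ)
      (soliton k c a b x t * (I * (k ^ 2 * α + β) +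
        2 * (k ^ 2).im * α * envelope k c a x t / (1 + envelope k c a x t))) t := by
  unfold soliton
  exact hasDerivAt_cexp_div (hasDerivAt_phase_time ha hb x)
    ((hasDerivAt_envelope_time ha x).ofReal_comp.const_add 1) (one_add_envelope_ne_zero hc x t)
    |>.congr_deriv (by push_cast; ring)

theorem hasDerivAt_deriv_soliton_space (hc : 0 ≤ c) (x t : ℝ) :
    HasDerivAt (deriv fun y => soliton k c a b y t)
      (soliton k c a b x t *
        ((k - 2 * k.re * envelope k c a x t / (1 + envelope k c a x t)) ^ 2 -
          4 * k.re ^ 2 * envelope k c a x t / (1 + envelope k c a x t) ^ 2)) x := by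
  have hderiv : (deriv fun y => soliton k c a b y t) = fun y => soliton k c a b y t *
      (k - 2 * k.re * envelope k c a y t / (1 + envelope k c a y t)) :=
    funext fun y => (hasDerivAt_soliton_space hc y t).deriv
  have hF := (hasDerivAt_envelope_space (c := c) (a := a) (k := k) x t).ofReal_comp
  have hslope := ((hF.const_mul (2 * k.re : ℂ)).div (hF.const_add 1)
    (one_add_envelope_ne_zero hc x t)).const_sub k
  rw [hderiv]
  refine ((hasDerivAt_soliton_space hc x t).mul hslope).congr_deriv ?_
  have := one_add_envelope_ne_zero (k := k) (a := a) hc x t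
  simp only [Pi.div_apply]
  field_simp
  push_cast
  ring

/-- `A_t / A`, `A_xx / A` and `γ ‖A‖²` for the soliton, written in terms of `F = envelope`. -/
theorem vcNLS_logDeriv_identity (k : ℂ) (F α β : ℝ) (hF : (1 + F : ℂ) ≠ 0) :
    I * (I * (k ^ 2 * α + β) + 2 * (k ^ 2).im * α * F / (1 + F))
      + α * ((k - 2 * k.re * F / (1 + F)) ^ 2 - 4 * k.re ^ 2 * F / (1 + F) ^ 2)
      + β + 8 * k.re ^ 2 * α * F / (1 + F) ^ 2 = 0 := by
  obtain ⟨p, q, rfl⟩ : ∃ p q : ℝ, k = p + q * I := ⟨k.re, k.im, (re_add_im k).symm⟩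
  simp only [sq, mul_im, mul_re, add_re, add_im, ofReal_re, ofReal_im, I_re, I_im, mul_zero,
    mul_one, sub_zero, add_zero, zero_add]
  field_simp
  ring_nf
  simp only [I_sq, I_pow_three, I_pow_four]
  push_cast
  ring

theorem soliton_solves_vcNLS {α β γ t : ℝ} (hc : 0 ≤ c) (ha : HasDerivAt a α t)
    (hb : HasDerivAt b β t) (hγ : γ = 8 * k.re ^ 2 * c * α) (x : ℝ) :
    I * deriv (fun τ => soliton k c a b x τ) t
      + (α : ℂ) * deriv (deriv fun y => soliton k c a b y t) x
      + (β : ℂ) * soliton k c a b x t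
      + (γ : ℂ) * (‖soliton k c a b x t‖ : ℂ) ^ 2 * soliton k c a b x t = 0 := by
  rw [(hasDerivAt_soliton_time hc ha hb x).deriv, (hasDerivAt_deriv_soliton_space hc x t).deriv]
  have hnorm := congrArg (fun r : ℝ => (r : ℂ))
    (mul_norm_soliton_sq (k := k) (a := a) (b := b) hc x t)
  push_cast at hnorm
  rw [hγ]
  push_cast
  linear_combination (soliton k c a b x t) * vcNLS_logDeriv_identity k (envelope k c a x t) α β
    (one_add_envelope_ne_zero hc x t) + 8 * k.re ^ 2 * α * soliton k c a b x t * hnorm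

end VcNLS

/-- The one-soliton solution of the vcNLS equation with linear coefficients
`α(t) = t/2`, `β(t) = t/5`, `γ(t) = t`. -/
theorem vcNLS_soliton_linear_coefficients :
    let A : ℝ → ℝ → ℂ := fun x t =>
      Complex.exp (Complex.I * (t : ℂ) ^ 2 / 10) *
        Complex.exp ((1 + Complex.I) * (x : ℂ) - (t : ℂ) ^ 2 / 2) /
        (1 + (1 / 4) * Complex.exp (2 * (x : ℂ) - (t : ℂ) ^ 2))
    ∀ x t : ℝ,
      Complex.I * deriv (fun τ => A x τ) t
        + ((t / 2 : ℝ) : ℂ) * deriv (deriv (fun y => A y t)) x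
        + ((t / 5 : ℝ) : ℂ) * A x t
        + (t : ℂ) * (‖A x t‖ : ℂ) ^ 2 * A x t = 0 := by
  intro A x t
  have hA : ∀ y τ, A y τ = VcNLS.soliton (1 + I) (1 / 4) (· ^ 2 / 4) (· ^ 2 / 10) y τ := by
    intro y τ
    simp only [A, VcNLS.soliton, VcNLS.phase, VcNLS.envelope, ← exp_add]
    congr 2
    · push_cast
      linear_combination (-(τ : ℂ) ^ 2 / 2 - I * τ ^ 2 / 4) * I_sq
    · simp [sq]
      ring_nf
  simp only [hA]
  exact VcNLS.soliton_solves_vcNLS (by norm_num)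
    (((hasDerivAt_pow 2 t).div_const 4).congr_deriv (by ring))
    (((hasDerivAt_pow 2 t).div_const 10).congr_deriv (by ring)) (by norm_num; ring) x
end

section
/- The function A(x,t) = e^{i·t²/10} · e^{(1+i)x - t³/3} / (1 + (1/4)·e^{2x - 2t³/3}) satisfies i·A_t + (t²/2)·A_xx + (t/5)·A + t²·|A|²·A = 0 for all (x,t) ∈ ℝ². -/
/-!
Since `e^s / (1 + e^{2s}/4) = sech (s - log 2)`, the solution is the modulated wave
`A = e^{i(x + φ(t))} q(x - v(t))` with `q = sech`, `v(t) = t³/3 + log 2` and `φ(t) = t²/10`.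
For such a wave the imaginary part of the equation is `(2α - v') q'`, the terms in `φ'` and `β`
cancel when `φ' = β`, and what is left is `α (q'' - q + 2 q³)` once `γ = 2α`; this vanishes
because `sech'' = sech - 2 sech³`.
-/

open Complex

noncomputable section

def vcNLSResidual (α β γ : ℝ → ℝ) (A : ℝ → ℝ → ℂ) (x t : ℝ) : ℂ :=
  I * deriv (fun τ => A x τ) t + (α t : ℂ) * deriv (deriv fun y => A y t) x
    + (β t : ℂ) * A x t + (γ t : ℂ) * (‖A x t‖ : ℂ) ^ 2 * A x t

def modulatedWave (q v φ : ℝ → ℝ) (x t : ℝ) : ℂ :=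
  cexp (↑(x + φ t) * I) * q (x - v t)

end

lemma hasDerivAt_phase_mul_comp_sub {f : ℝ → ℂ} {f' : ℂ} {c s x : ℝ}
    (hf : HasDerivAt f f' (x - s)) :
    HasDerivAt (fun y : ℝ => cexp (↑(y + c) * I) * f (y - s))
      (cexp (↑(x + c) * I) * (I * f (x - s) + f')) x := by
  have hphase := ((((hasDerivAt_id x).add_const c).ofReal_comp).mul_const I).cexp
  refine (hphase.mul (hf.comp_sub_const x s)).congr_deriv ?_
  simp only [id, ofReal_one, one_mul]
  ring

lemma modulatedWave_hasDerivAt_time {q q' v φ : ℝ → ℝ} {v' φ' x t : ℝ}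
    (hq : HasDerivAt q (q' (x - v t)) (x - v t)) (hv : HasDerivAt v v' t)
    (hφ : HasDerivAt φ φ' t) :
    HasDerivAt (fun τ => modulatedWave q v φ x τ)
      (cexp (↑(x + φ t) * I) * (I * φ' * q (x - v t) - v' * q' (x - v t))) t := by
  have hphase := (((hφ.const_add x).ofReal_comp).mul_const I).cexp
  have hshift := (hq.comp t (hv.const_sub x)).ofReal_comp
  refine (hphase.mul hshift).congr_deriv ?_
  simp only [Function.comp_apply, ofReal_mul, ofReal_neg]
  ring

lemma norm_modulatedWave_sq (q v φ : ℝ → ℝ) (x t : ℝ) :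
    (‖modulatedWave q v φ x t‖ : ℂ) ^ 2 = (q (x - v t) : ℂ) ^ 2 := by
  rw [modulatedWave, norm_mul, norm_exp_ofReal_mul_I, one_mul, norm_real, Real.norm_eq_abs,
    ← ofReal_pow, sq_abs, ofReal_pow]

theorem vcNLSResidual_modulatedWave_eq_zero {q q' v φ α β γ : ℝ → ℝ} {x t : ℝ}
    (hq : ∀ ξ, HasDerivAt q (q' ξ) ξ) (hq' : ∀ ξ, HasDerivAt q' (q ξ - 2 * q ξ ^ 3) ξ)
    (hv : HasDerivAt v (2 * α t) t) (hφ : HasDerivAt φ (β t) t) (hγ : γ t = 2 * α t) :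
    vcNLSResidual α β γ (modulatedWave q v φ) x t = 0 := by
  have hfirst : deriv (fun y => modulatedWave q v φ y t) = fun y =>
      cexp (↑(y + φ t) * I) * (I * q (y - v t) + q' (y - v t)) :=
    funext fun y => (hasDerivAt_phase_mul_comp_sub (f := fun ξ => (q ξ : ℂ))
      (hq (y - v t)).ofReal_comp).deriv
  have hsecond : HasDerivAt (fun y => cexp (↑(y + φ t) * I) * (I * q (y - v t) + q' (y - v t)))
      (cexp (↑(x + φ t) * I) * (I * (I * q (x - v t) + q' (x - v t))
        + (I * q' (x - v t) + (q (x - v t) - 2 * q (x - v t) ^ 3 : ℝ)))) x :=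
    hasDerivAt_phase_mul_comp_sub (f := fun ξ => I * q ξ + q' ξ)
      (((hq _).ofReal_comp.const_mul I).add (hq' _).ofReal_comp)
  rw [vcNLSResidual, (modulatedWave_hasDerivAt_time (hq _) hv hφ).deriv, hfirst, hsecond.deriv,
    norm_modulatedWave_sq, modulatedWave, hγ]
  set E := cexp (↑(x + φ t) * I)
  push_cast
  linear_combination E * (β t + α t) * q (x - v t) * I_sq

lemma Real.hasDerivAt_cosh_inv (ξ : ℝ) :
    HasDerivAt (fun ξ => (Real.cosh ξ)⁻¹) (-Real.sinh ξ / Real.cosh ξ ^ 2) ξ :=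
  (Real.hasDerivAt_cosh ξ).inv (Real.cosh_pos ξ).ne'

lemma Real.hasDerivAt_neg_sinh_div_cosh_sq (ξ : ℝ) :
    HasDerivAt (fun ξ => -Real.sinh ξ / Real.cosh ξ ^ 2)
      ((Real.cosh ξ)⁻¹ - 2 * (Real.cosh ξ)⁻¹ ^ 3) ξ := by
  have hc := (Real.cosh_pos ξ).ne'
  refine ((Real.hasDerivAt_sinh ξ).neg.div ((Real.hasDerivAt_cosh ξ).pow 2)
    (pow_ne_zero 2 hc)).congr_deriv ?_
  simp only [Pi.neg_apply, Pi.pow_apply]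
  field_simp
  norm_num
  linear_combination (-2 * Real.cosh ξ) * Real.cosh_sq_sub_sinh_sq ξ

lemma Real.inv_cosh_sub_log_two (s : ℝ) :
    (Real.cosh (s - Real.log 2))⁻¹ = Real.exp s / (1 + 1 / 4 * Real.exp s ^ 2) := by
  rw [Real.cosh_eq, neg_sub, Real.exp_sub, Real.exp_sub, Real.exp_log two_pos]
  have := Real.exp_pos s
  field_simp
  ring

lemma soliton_eq_modulatedWave_sech (x t : ℝ) :
    cexp (I * (t : ℂ) ^ 2 / 10) * cexp ((1 + I) * (x : ℂ) - (t : ℂ) ^ 3 / 3) /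
        (1 + 1 / 4 * cexp (2 * (x : ℂ) - 2 * (t : ℂ) ^ 3 / 3)) =
      modulatedWave (fun ξ => (Real.cosh ξ)⁻¹) (fun τ => τ ^ 3 / 3 + Real.log 2)
        (fun τ => τ ^ 2 / 10) x t := by
  rw [modulatedWave, ← sub_sub, Real.inv_cosh_sub_log_two]
  push_cast
  rw [mul_div_assoc', ← exp_add, ← exp_add, ← exp_nat_mul]
  congr 2 <;> ring_nf

/-- The one-soliton solution of the vcNLS equation with quadratic coefficients
`α(t) = t²/2`, `β(t) = t/5`, `γ(t) = t²`. -/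
theorem vcNLS_soliton_quadratic_coefficients :
    let A : ℝ → ℝ → ℂ := fun x t =>
      Complex.exp (Complex.I * (t : ℂ) ^ 2 / 10) *
        Complex.exp ((1 + Complex.I) * (x : ℂ) - (t : ℂ) ^ 3 / 3) /
        (1 + (1 / 4) * Complex.exp (2 * (x : ℂ) - 2 * (t : ℂ) ^ 3 / 3))
    ∀ x t : ℝ,
      Complex.I * deriv (fun τ => A x τ) t
        + ((t ^ 2 / 2 : ℝ) : ℂ) * deriv (deriv (fun y => A y t)) x
        + ((t / 5 : ℝ) : ℂ) * A x t
        + ((t ^ 2 : ℝ) : ℂ) * (‖A x t‖ : ℂ) ^ 2 * A x t = 0 := by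
  intro A x t
  have hA : A = modulatedWave (fun ξ => (Real.cosh ξ)⁻¹) (fun τ => τ ^ 3 / 3 + Real.log 2)
      (fun τ => τ ^ 2 / 10) :=
    funext fun y => funext fun τ => soliton_eq_modulatedWave_sech y τ
  have hv : HasDerivAt (fun τ => τ ^ 3 / 3 + Real.log 2) (2 * (t ^ 2 / 2)) t :=
    (((hasDerivAt_pow 3 t).div_const 3).add_const _).congr_deriv (by ring)
  have hφ : HasDerivAt (fun τ => τ ^ 2 / 10) (t / 5) t :=
    ((hasDerivAt_pow 2 t).div_const 10).congr_deriv (by ring)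
  show vcNLSResidual (fun τ => τ ^ 2 / 2) (fun τ => τ / 5) (fun τ => τ ^ 2) A x t = 0
  rw [hA]
  exact vcNLSResidual_modulatedWave_eq_zero Real.hasDerivAt_cosh_inv
    Real.hasDerivAt_neg_sinh_div_cosh_sq hv hφ (by ring)
end

section
/- The function A(x,t) = e^{i·t²/10} · e^{(1+i)x + 2·cos(t)} / (1 + (1/8)·e^{2x + 4·cos(t)}) satisfies i·A_t + sin(t)·A_xx + (t/5)·A + sin(t)·|A|²·A = 0 for all (x,t) ∈ ℝ². -/
/-!
The solution is a moving, phase-modulated bright soliton: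
`A(x,t) = exp(i(Θ(t) + (x + s(t)))) ψ(x + s(t))` with `Θ(t) = t²/10 - 2 cos t`, `s(t) = 2 cos t` and
`ψ(y) = e^y / (1 + e^{2y}/8)`, which solves `ψ'' = ψ - ψ³`.
For any real profile with `ψ'' = c ψ - κ ψ³`, a phase `Θ + b (x + s)` with `s' = -2bα` and
`Θ' = β + (c + b²) α` reduces the equation to `α (ψ'' - c ψ + κ ψ³) = 0` when `γ = κ α`:
the condition on `s'` cancels the terms in `ψ'`, the one on `Θ'` those in `ψ`.
-/

open Complex

def IsVcNLSSolution (α β γ : ℝ → ℝ) (A : ℝ → ℝ → ℂ) : Prop :=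
  ∀ x t : ℝ,
    I * deriv (fun τ => A x τ) t + (α t : ℂ) * deriv (deriv (fun y => A y t)) x
      + (β t : ℂ) * A x t + (γ t : ℂ) * (‖A x t‖ : ℂ) ^ 2 * A x t = 0

theorem HasDerivAt.cexp_ofReal_mul_I_mul {φ : ℝ → ℝ} {u : ℝ → ℂ} {φ' : ℝ} {u' : ℂ} {y : ℝ}
    (hφ : HasDerivAt φ φ' y) (hu : HasDerivAt u u' y) :
    HasDerivAt (fun y => Complex.exp (φ y * I) * u y)
      (Complex.exp (φ y * I) * (φ' * I * u y + u')) y :=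
  ((hφ.ofReal_comp.mul_const I).cexp.mul hu).congr_deriv (by ring)

theorem isVcNLSSolution_galilean_boost {α β γ ψ Θ s : ℝ → ℝ} {c κ b : ℝ}
    (hψ : Differentiable ℝ ψ)
    (hψ'' : ∀ y, HasDerivAt (deriv ψ) (c * ψ y - κ * ψ y ^ 3) y)
    (hΘ : ∀ t, HasDerivAt Θ (β t + (c + b ^ 2) * α t) t)
    (hs : ∀ t, HasDerivAt s (-2 * b * α t) t)
    (hγ : ∀ t, γ t = κ * α t) :
    IsVcNLSSolution α β γ fun x t => exp ((Θ t + b * (x + s t) : ℝ) * I) * ψ (x + s t) := by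
  intro x t
  have hψ' : ∀ y, HasDerivAt ψ (deriv ψ y) y := fun y => (hψ y).hasDerivAt
  have hshift : ∀ y, HasDerivAt (fun y => y + s t) 1 y := fun y => (hasDerivAt_id' y).add_const _
  have hdt : HasDerivAt (fun τ => exp ((Θ τ + b * (x + s τ) : ℝ) * I) * ψ (x + s τ))
      (exp ((Θ t + b * (x + s t) : ℝ) * I) *
        ((β t + (c - b ^ 2) * α t) * I * ψ (x + s t) - 2 * b * α t * deriv ψ (x + s t))) t := by
    refine (((hΘ t).add (((hs t).const_add x).const_mul b)).cexp_ofReal_mul_I_mul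
      ((hψ' _).comp t ((hs t).const_add x)).ofReal_comp).congr_deriv ?_
    simp only [Pi.add_apply, Function.comp_apply]
    push_cast
    ring
  have hdx : ∀ y, HasDerivAt (fun y => exp ((Θ t + b * (y + s t) : ℝ) * I) * ψ (y + s t))
      (exp ((Θ t + b * (y + s t) : ℝ) * I) * (b * I * ψ (y + s t) + deriv ψ (y + s t))) y := by
    intro y
    refine ((((hshift y).const_mul b).const_add (Θ t)).cexp_ofReal_mul_I_mul
      ((hψ' (y + s t)).comp y (hshift y)).ofReal_comp).congr_deriv ?_
    simp only [Function.comp_apply]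
    push_cast
    ring
  have hdxx : HasDerivAt
      (fun y => exp ((Θ t + b * (y + s t) : ℝ) * I) * (b * I * ψ (y + s t) + deriv ψ (y + s t)))
      (exp ((Θ t + b * (x + s t) : ℝ) * I) * ((c - b ^ 2) * ψ (x + s t)
        + 2 * b * I * deriv ψ (x + s t) - κ * ψ (x + s t) ^ 3)) x := by
    refine ((((hshift x).const_mul b).const_add (Θ t)).cexp_ofReal_mul_I_mul
      ((((hψ' (x + s t)).comp x (hshift x)).ofReal_comp.const_mul (b * I)).add
        ((hψ'' (x + s t)).comp x (hshift x)).ofReal_comp)).congr_deriv ?_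
    simp only [Pi.add_apply, Function.comp_apply]
    set E := exp ((Θ t + b * (x + s t) : ℝ) * I)
    push_cast
    linear_combination ((b : ℂ) ^ 2 * ψ (x + s t) * E) * I_sq
  have hnorm :
      (‖exp ((Θ t + b * (x + s t) : ℝ) * I) * ψ (x + s t)‖ : ℂ) ^ 2 = ψ (x + s t) ^ 2 := by
    rw [norm_mul, norm_exp_ofReal_mul_I, one_mul, norm_real, Real.norm_eq_abs, ← ofReal_pow,
      sq_abs, ofReal_pow]
  simp only
  rw [hdt.deriv, funext fun y => (hdx y).deriv, hdxx.deriv, hnorm, hγ]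
  set E := exp ((Θ t + b * (x + s t) : ℝ) * I)
  push_cast
  linear_combination (E * (β t + (c - b ^ 2) * α t) * ψ (x + s t)) * I_sq

/-- For `M > 0` this is `sech (a y + log √M) / (2 √M)`. -/
noncomputable def solitonProfile (a M y : ℝ) : ℝ := Real.exp (a * y) / (1 + M * Real.exp (a * y) ^ 2)

section solitonProfile

variable {a M : ℝ}

theorem hasDerivAt_solitonProfile (hM : 0 ≤ M) (y : ℝ) :
    HasDerivAt (solitonProfile a M)
      (a * Real.exp (a * y) * (1 - M * Real.exp (a * y) ^ 2) / (1 + M * Real.exp (a * y) ^ 2) ^ 2)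
      y := by
  have he : HasDerivAt (fun y => Real.exp (a * y)) (Real.exp (a * y) * a) y :=
    ((hasDerivAt_id' y).const_mul a).exp.congr_deriv (by ring)
  have hD : 1 + M * Real.exp (a * y) ^ 2 ≠ 0 := by positivity
  refine (he.div ((he.pow 2).const_mul M |>.const_add 1) hD).congr_deriv ?_
  simp only [Pi.pow_apply]
  field_simp
  ring

theorem deriv_solitonProfile (hM : 0 ≤ M) :
    deriv (solitonProfile a M) = fun y =>
      a * Real.exp (a * y) * (1 - M * Real.exp (a * y) ^ 2) / (1 + M * Real.exp (a * y) ^ 2) ^ 2 :=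
  funext fun y => (hasDerivAt_solitonProfile hM y).deriv

theorem hasDerivAt_deriv_solitonProfile (hM : 0 ≤ M) (y : ℝ) :
    HasDerivAt (deriv (solitonProfile a M))
      (a ^ 2 * solitonProfile a M y - 8 * a ^ 2 * M * solitonProfile a M y ^ 3) y := by
  have he : HasDerivAt (fun y => Real.exp (a * y)) (Real.exp (a * y) * a) y :=
    ((hasDerivAt_id' y).const_mul a).exp.congr_deriv (by ring)
  have hD : 1 + M * Real.exp (a * y) ^ 2 ≠ 0 := by positivity
  rw [deriv_solitonProfile hM]
  refine (((he.const_mul a).mul ((he.pow 2).const_mul M |>.const_sub 1)).div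
    (((he.pow 2).const_mul M |>.const_add 1).pow 2) (pow_ne_zero 2 hD)).congr_deriv ?_
  simp only [solitonProfile, Pi.pow_apply, Pi.mul_apply]
  field_simp
  ring

end solitonProfile

/-- The one-soliton solution of the vcNLS equation with trigonometric coefficients
`α(t) = γ(t) = sin t`, `β(t) = t/5`. -/
theorem vcNLS_soliton_sine_coefficients :
    let A : ℝ → ℝ → ℂ := fun x t =>
      Complex.exp (Complex.I * (t : ℂ) ^ 2 / 10) *
        Complex.exp ((1 + Complex.I) * (x : ℂ) + 2 * (Real.cos t : ℂ)) /
        (1 + (1 / 8) * Complex.exp (2 * (x : ℂ) + 4 * (Real.cos t : ℂ)))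
    ∀ x t : ℝ,
      Complex.I * deriv (fun τ => A x τ) t
        + ((Real.sin t : ℝ) : ℂ) * deriv (deriv (fun y => A y t)) x
        + ((t / 5 : ℝ) : ℂ) * A x t
        + ((Real.sin t : ℝ) : ℂ) * (‖A x t‖ : ℂ) ^ 2 * A x t = 0 := by
  intro A
  have hA : A = fun x t => exp ((t ^ 2 / 10 - 2 * Real.cos t + 1 * (x + 2 * Real.cos t) : ℝ) * I)
      * solitonProfile 1 (1 / 8) (x + 2 * Real.cos t) := by
    funext x t
    simp only [A, solitonProfile]
    push_cast
    rw [← Complex.exp_nat_mul, ← mul_div_assoc, ← exp_add, ← exp_add]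
    congr 2 <;> push_cast <;> ring_nf
  show IsVcNLSSolution Real.sin (fun t => t / 5) Real.sin A
  rw [hA]
  refine isVcNLSSolution_galilean_boost (Θ := fun t => t ^ 2 / 10 - 2 * Real.cos t)
    (s := fun t => 2 * Real.cos t) (b := 1) (κ := 8 * 1 ^ 2 * (1 / 8))
    (fun y => (hasDerivAt_solitonProfile (by norm_num) y).differentiableAt)
    (hasDerivAt_deriv_solitonProfile (by norm_num)) (fun t => ?_) (fun t => ?_)
    (fun t => by norm_num)
  · exact (((hasDerivAt_pow 2 t).div_const 10).sub
      ((Real.hasDerivAt_cos t).const_mul 2)).congr_deriv (by push_cast; ring)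
  · exact ((Real.hasDerivAt_cos t).const_mul 2).congr_deriv (by ring)
end

section
/- Let A : ℝ × ℝ → ℂ be smooth and fix t ∈ ℝ. Suppose there exist points x₁, x₂, x₃ such that the 3×3 complex matrix with rows (A_xx(xⱼ,t), A(xⱼ,t), |A(xⱼ,t)|²·A(xⱼ,t)), j = 1,2,3, is invertible. If A satisfies the vcNLS equation at time t with real coefficient triples (α₁(t), β₁(t), γ₁(t)) and also with (α₂(t), β₂(t), γ₂(t)), then α₁(t) = α₂(t), β₁(t) = β₂(t), and γ₁(t) = γ₂(t). -/
/-- Identifiability of all three variable coefficients of the vcNLS equation at a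
fixed time `t`, given three spatial points at which the matrix of rows
`(A_xx, A, |A|²·A)` is invertible. -/
theorem vcNLS_three_coefficient_identifiability
    (A : ℝ → ℝ → ℂ) (α₁ β₁ γ₁ α₂ β₂ γ₂ : ℝ → ℝ) (t : ℝ)
    (hA : ContDiff ℝ (⊤ : ℕ∞) (fun p : ℝ × ℝ => A p.1 p.2))
    (xs : Fin 3 → ℝ)
    (hM : IsUnit (Matrix.of (fun j : Fin 3 =>
      ![deriv (deriv (fun y => A y t)) (xs j),
        A (xs j) t,
        (‖A (xs j) t‖ : ℂ) ^ 2 * A (xs j) t])).det)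
    (h1 : ∀ x : ℝ,
      Complex.I * deriv (fun τ => A x τ) t
        + (α₁ t : ℂ) * deriv (deriv (fun y => A y t)) x
        + (β₁ t : ℂ) * A x t
        + (γ₁ t : ℂ) * (‖A x t‖ : ℂ) ^ 2 * A x t = 0)
    (h2 : ∀ x : ℝ,
      Complex.I * deriv (fun τ => A x τ) t
        + (α₂ t : ℂ) * deriv (deriv (fun y => A y t)) x
        + (β₂ t : ℂ) * A x t
        + (γ₂ t : ℂ) * (‖A x t‖ : ℂ) ^ 2 * A x t = 0) :
    α₁ t = α₂ t ∧ β₁ t = β₂ t ∧ γ₁ t = γ₂ t := by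
  set M : Matrix (Fin 3) (Fin 3) ℂ := Matrix.of (fun j : Fin 3 =>
      ![deriv (deriv (fun y => A y t)) (xs j),
        A (xs j) t,
        (‖A (xs j) t‖ : ℂ) ^ 2 * A (xs j) t]) with hMdef
  set c : Fin 3 → ℂ := ![(α₁ t : ℂ) - α₂ t, (β₁ t : ℂ) - β₂ t, (γ₁ t : ℂ) - γ₂ t] with hc
  have hmv : M.mulVec c = 0 := by
    funext j
    have e1 := h1 (xs j)
    have e2 := h2 (xs j)
    have key : ((α₁ t : ℂ) - α₂ t) * deriv (deriv (fun y => A y t)) (xs j)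
        + ((β₁ t : ℂ) - β₂ t) * A (xs j) t
        + ((γ₁ t : ℂ) - γ₂ t) * ((‖A (xs j) t‖ : ℂ) ^ 2 * A (xs j) t) = 0 := by
      have := sub_eq_zero.mpr (e1.trans e2.symm)
      ring_nf at this ⊢
      linear_combination this
    simp only [Matrix.mulVec, dotProduct, hMdef, hc, Fin.sum_univ_three,
      Matrix.of_apply, Matrix.cons_val_zero, Matrix.cons_val_one, Matrix.head_cons,
      Matrix.cons_val_two, Matrix.tail_cons, Pi.zero_apply]
    linear_combination key
  have hczero : c = 0 := by
    have h := congrArg (M⁻¹.mulVec) hmv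
    rwa [Matrix.mulVec_mulVec, Matrix.nonsing_inv_mul M hM, Matrix.one_mulVec,
      Matrix.mulVec_zero] at h
  have h0 := congrFun hczero 0
  have h1' := congrFun hczero 1
  have h2' := congrFun hczero 2
  simp only [hc, Matrix.cons_val_zero, Matrix.cons_val_one, Matrix.head_cons, Pi.zero_apply,
    Matrix.cons_val_two, Matrix.tail_cons, sub_eq_zero] at h0 h1' h2'
  exact ⟨by exact_mod_cast h0, by exact_mod_cast h1', by exact_mod_cast h2'⟩
end
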